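/- arXiv:1201.4792 — 2 statements merged into one kernel-verified Lean document; each statement's English description precedes it below -/
import Mathlib

section
/- For a noncrossing partition π of {1,...,p} viewed as a permutation and the full cycle γ ∈ S_p, for every integer l one has |1| + |π^l γ| = |πγ⁻¹| + |π^{l+1}|, where |1| = p is the number of cycles of the identity and |σ| denotes the number of cycles of σ. -/
/-!
Write `o(σ)` for the number of cycles of a permutation of an `n`-set and `o(H)` for the number
of orbits of a group `H` of permutations. Adjoining a transposition `(x y)` to `H` lowers `o(H)`
by one if `x, y` lie in different orbits and leaves it unchanged otherwise; together with
`sign σ = (-1) ^ (n + o(σ))` this shows that `σ ↦ σ (x y)` splits a cycle or joins two.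
Induction on transpositions then gives, for all `A, B`, the triangle inequality
`o(A) + o(B) ≤ o(AB) + n` and the genus inequality `o(A) + o(B) + o(AB) ≤ n + 2 o(⟨A, B⟩)`,
and, when every cycle of `B` lies inside a cycle of `π`,
`o(⟨B, K⟩) + o(π) ≤ o(⟨π, K⟩) + o(B)`.

Take `B = π^{l+1}` and `K = π⁻¹γ`, so that `BK = π^l γ`, `πK = γ` and `o(K) = o(πγ⁻¹)`.
Since `o(⟨π, K⟩) ≤ o(γ) = 1`, the last inequality and `o(π) + o(πγ⁻¹) = n + 1` give
`o(⟨B, K⟩) ≤ o(B) + o(K) - n`, and the genus inequality turns this into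
`o(BK) + n ≤ o(B) + o(K)`, the reverse of the triangle inequality.
-/

/-- The number of cycles of a permutation, counting fixed points as cycles. -/
def cycleCount {p : ℕ} (σ : Equiv.Perm (Fin p)) : ℕ :=
  σ.cycleType.card + (Finset.univ.filter fun x => σ x = x).card

/-- A permutation comes from a noncrossing partition of `{1,…,p}` (by cycling increasingly
inside each block) iff `|π| + |πγ⁻¹| = p + 1` (Biane's characterization). -/
def IsNCPerm {p : ℕ} (π : Equiv.Perm (Fin p)) : Prop :=
  cycleCount π + cycleCount (π * (finRotate p)⁻¹) = p + 1

open Equiv Equiv.Perm MulAction Finset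
open Subgroup (zpowers mem_zpowers zpowers_le)

namespace Setoid

variable {α : Type*} [Finite α] {r s : Setoid α}

theorem card_quotient_le_of_le (h : r ≤ s) : Nat.card (Quotient s) ≤ Nat.card (Quotient r) :=
  Nat.card_le_card_of_surjective (map_of_le h) (Quotient.ind fun a => ⟨Quotient.mk r a, rfl⟩)

theorem card_quotient_add_one_of_le (hrs : r ≤ s) {x y : α} (hr : ¬r x y) (hs : s x y)
    (h : ∀ a b, s a b → ¬r a y → ¬r b y → r a b) :
    Nat.card (Quotient s) + 1 = Nat.card (Quotient r) := by
  classical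
  have := Fintype.ofFinite (Quotient r)
  let f : {q : Quotient r // q ≠ Quotient.mk r y} → Quotient s := fun q => map_of_le hrs q
  have hf : Function.Bijective f := by
    refine ⟨?_, Quotient.ind fun b => ?_⟩
    · rintro ⟨qa, ha⟩ ⟨qb, hb⟩ hab
      induction qa using Quotient.ind
      induction qb using Quotient.ind
      exact Subtype.ext (Quotient.sound
        (h _ _ (Quotient.exact hab) (mt Quotient.sound ha) (mt Quotient.sound hb)))
    · by_cases hb : r b y
      · exact ⟨⟨Quotient.mk r x, mt Quotient.exact hr⟩,
          Quotient.sound (s.trans hs (s.symm (hrs hb)))⟩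
      · exact ⟨⟨Quotient.mk r b, mt Quotient.exact hb⟩, rfl⟩
  rw [← Nat.card_congr (Equiv.ofBijective f hf), Nat.card_eq_fintype_card,
    Nat.card_eq_fintype_card, Fintype.card_subtype_compl, Fintype.card_subtype_eq]
  have := Fintype.card_pos_iff.2 ⟨Quotient.mk r y⟩
  omega

end Setoid

namespace Subgroup

variable {G : Type*} [Group G]

theorem zpowers_mul_le_sup_zpowers (a b : G) : zpowers (a * b) ≤ zpowers a ⊔ zpowers b :=
  zpowers_le.2 (mul_mem (mem_sup_left (mem_zpowers a)) (mem_sup_right (mem_zpowers b)))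

theorem zpowers_mul_sup_zpowers_right (a b : G) :
    zpowers (a * b) ⊔ zpowers b = zpowers a ⊔ zpowers b := by
  refine le_antisymm (sup_le (zpowers_mul_le_sup_zpowers a b) le_sup_right) (sup_le ?_ le_sup_right)
  simpa using zpowers_mul_le_sup_zpowers (a * b) b⁻¹
    |>.trans (sup_le_sup_left zpowers_inv.le _)

end Subgroup

namespace Equiv.Perm

variable {α : Type*}

def youngSubgroup (r : Setoid α) : Subgroup (Perm α) where
  carrier := {g | ∀ a, r (g a) a}
  mul_mem' hg hh a := r.trans (hg _) (hh a)
  one_mem' := r.refl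
  inv_mem' {g} hg a := by simpa using r.symm (hg (g⁻¹ a))

theorem swap_mem_youngSubgroup [DecidableEq α] {r : Setoid α} {x y : α} (h : r x y) :
    swap x y ∈ youngSubgroup r := by
  intro a
  rcases eq_or_ne a x with rfl | hx
  · simpa using r.symm h
  rcases eq_or_ne a y with rfl | hy
  · simpa using h
  · simp [swap_apply_of_ne_of_ne hx hy]

theorem orbitRel_le_iff_le_youngSubgroup {H : Subgroup (Perm α)} {r : Setoid α} :
    orbitRel H α ≤ r ↔ H ≤ youngSubgroup r := by
  refine ⟨fun h g hg a => h (mem_orbit_iff.2 ⟨⟨g, hg⟩, rfl⟩), fun h a b hab => ?_⟩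
  obtain ⟨⟨g, hg⟩, rfl⟩ := mem_orbit_iff.1 (orbitRel_apply.1 hab)
  exact h hg b

theorem gc_orbitRel_youngSubgroup :
    GaloisConnection (fun H : Subgroup (Perm α) => orbitRel H α) youngSubgroup :=
  fun _ _ => orbitRel_le_iff_le_youngSubgroup

theorem orbitRel_zpowers_apply {σ : Perm α} {x y : α} :
    orbitRel (zpowers σ) α x y ↔ σ.SameCycle x y := by
  rw [orbitRel_apply, mem_orbit_iff, sameCycle_comm]
  constructor
  · rintro ⟨⟨_, k, rfl⟩, rfl⟩
    exact ⟨k, rfl⟩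
  · rintro ⟨k, rfl⟩
    exact ⟨⟨σ ^ k, k, rfl⟩, rfl⟩

theorem orbitRel_zpowers (σ : Perm α) : orbitRel (zpowers σ) α = SameCycle.setoid σ :=
  Setoid.ext fun _ _ => orbitRel_zpowers_apply

theorem orbitRel_sup (H K : Subgroup (Perm α)) :
    orbitRel ↥(H ⊔ K) α = orbitRel H α ⊔ orbitRel K α :=
  gc_orbitRel_youngSubgroup.l_sup

noncomputable def numOrbits (H : Subgroup (Perm α)) : ℕ :=
  Nat.card (Quotient (orbitRel H α))

noncomputable def numCycles (σ : Perm α) : ℕ :=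
  numOrbits (zpowers σ)

theorem numOrbits_antitone [Finite α] : Antitone (numOrbits (α := α)) :=
  fun _ _ h => Setoid.card_quotient_le_of_le (gc_orbitRel_youngSubgroup.monotone_l h)

theorem numCycles_le_card [Fintype α] (σ : Perm α) : numCycles σ ≤ Fintype.card α :=
  Nat.card_eq_fintype_card (α := α) ▸
    Nat.card_le_card_of_surjective (Quotient.mk _) Quotient.mk_surjective

section Swap

variable [DecidableEq α] {H : Subgroup (Perm α)} {x y : α}

theorem numOrbits_sup_zpowers_swap_of_rel (h : orbitRel H α x y) :
    numOrbits (H ⊔ zpowers (swap x y)) = numOrbits H := by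
  suffices orbitRel ↥(H ⊔ zpowers (swap x y)) α = orbitRel H α by rw [numOrbits, this, numOrbits]
  refine le_antisymm (orbitRel_le_iff_le_youngSubgroup.2 (sup_le ?_ ?_))
    (gc_orbitRel_youngSubgroup.monotone_l le_sup_left)
  · exact orbitRel_le_iff_le_youngSubgroup.1 le_rfl
  · exact zpowers_le.2 (swap_mem_youngSubgroup h)

theorem numOrbits_sup_zpowers_swap_add_one [Finite α] (h : ¬orbitRel H α x y) :
    numOrbits (H ⊔ zpowers (swap x y)) + 1 = numOrbits H := by
  classical
  set r := orbitRel H α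
  -- the orbits of `H ⊔ ⟨(x y)⟩` are those of `H`, with the orbit of `y` glued to that of `x`
  let f : α → Quotient r := fun a => if r a y then Quotient.mk r x else Quotient.mk r a
  have hf : orbitRel ↥(H ⊔ zpowers (swap x y)) α ≤ Setoid.ker f := by
    refine orbitRel_le_iff_le_youngSubgroup.2 (sup_le ?_ (zpowers_le.2 ?_))
    · refine orbitRel_le_iff_le_youngSubgroup.1 fun a b hab => ?_
      have hy : r a y ↔ r b y := ⟨r.trans (r.symm hab), r.trans hab⟩
      have hq : Quotient.mk r a = Quotient.mk r b := Quotient.sound hab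
      simp only [Setoid.ker_def, f, hy, hq]
    · refine swap_mem_youngSubgroup ?_
      simp [Setoid.ker_def, f]
  refine Setoid.card_quotient_add_one_of_le (gc_orbitRel_youngSubgroup.monotone_l le_sup_left) h
    (mem_orbit_iff.2 ⟨⟨swap x y, Subgroup.mem_sup_right (mem_zpowers _)⟩, swap_apply_right x y⟩)
    fun a b hab ha hb => Quotient.exact ?_
  simpa [Setoid.ker_def, f, ha, hb] using hf hab

theorem numOrbits_le_sup_zpowers_swap_add_one [Finite α] (H : Subgroup (Perm α)) (x y : α) :
    numOrbits H ≤ numOrbits (H ⊔ zpowers (swap x y)) + 1 := by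
  by_cases h : orbitRel H α x y
  · rw [numOrbits_sup_zpowers_swap_of_rel h]
    omega
  · rw [numOrbits_sup_zpowers_swap_add_one h]

end Swap

section CycleType

variable [Fintype α] [DecidableEq α]

def toCycleFactorOrFixedPoint (σ : Perm α) (a : α) : σ.cycleFactorsFinset ⊕ {x // σ x = x} :=
  if h : σ a = a then .inr ⟨a, h⟩
  else .inl ⟨σ.cycleOf a, cycleOf_mem_cycleFactorsFinset_iff.2 (mem_support.2 h)⟩

theorem toCycleFactorOrFixedPoint_eq_iff {σ : Perm α} {a b : α} :
    σ.toCycleFactorOrFixedPoint a = σ.toCycleFactorOrFixedPoint b ↔ σ.SameCycle a b := by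
  unfold toCycleFactorOrFixedPoint
  by_cases ha : σ a = a <;> by_cases hb : σ b = b <;> simp only [ha, hb, dif_pos, dif_neg,
    not_false_eq_true, reduceCtorEq, Sum.inl.injEq, Sum.inr.injEq, Subtype.mk.injEq, false_iff]
  · exact ⟨fun h => h ▸ SameCycle.rfl, fun h => h.eq_of_left ha⟩
  · exact fun h => hb (h.apply_eq_self_iff.1 ha)
  · exact fun h => ha (h.apply_eq_self_iff.2 hb)
  · exact (sameCycle_iff_cycleOf_eq_of_mem_support (mem_support.2 ha) (mem_support.2 hb)).symm

theorem surjective_toCycleFactorOrFixedPoint (σ : Perm α) :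
    Function.Surjective σ.toCycleFactorOrFixedPoint := by
  rintro (⟨c, hc⟩ | ⟨a, ha⟩)
  · obtain ⟨a, ha⟩ := (mem_cycleFactorsFinset_iff.1 hc).1.nonempty_support
    have hσa : σ a ≠ a := mem_support.1 (mem_cycleFactorsFinset_support_le hc ha)
    exact ⟨a, by simp [toCycleFactorOrFixedPoint, hσa, ← cycle_is_cycleOf ha hc]⟩
  · exact ⟨a, by simp [toCycleFactorOrFixedPoint, ha]⟩

theorem numCycles_eq_card_cycleType_add (σ : Perm α) :
    numCycles σ = Multiset.card σ.cycleType + #{x | σ x = x} := by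
  have hker : orbitRel (zpowers σ) α = Setoid.ker σ.toCycleFactorOrFixedPoint :=
    Setoid.ext fun _ _ => orbitRel_zpowers_apply.trans toCycleFactorOrFixedPoint_eq_iff.symm
  rw [numCycles, numOrbits, hker, Nat.card_congr (Setoid.quotientKerEquivOfSurjective _
    (surjective_toCycleFactorOrFixedPoint σ)), Nat.card_sum, Nat.card_eq_finsetCard,
    Nat.card_eq_fintype_card, Fintype.card_subtype, cycleType_def, Multiset.card_map, card_val]

theorem numCycles_eq_card_cycleType_add_card_sub_sum (σ : Perm α) :
    numCycles σ = Multiset.card σ.cycleType + (Fintype.card α - σ.cycleType.sum) := by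
  have hfix : ({x | σ x = x} : Finset α) = σ.supportᶜ := by ext; simp
  rw [numCycles_eq_card_cycleType_add, hfix, card_compl, sum_cycleType]

theorem numCycles_one : numCycles (1 : Perm α) = Fintype.card α := by
  simp [numCycles_eq_card_cycleType_add_card_sub_sum]

theorem numCycles_inv (σ : Perm α) : numCycles σ⁻¹ = numCycles σ := by
  simp only [numCycles_eq_card_cycleType_add_card_sub_sum, cycleType_inv]

theorem numCycles_conj (g σ : Perm α) : numCycles (g * σ * g⁻¹) = numCycles σ := by
  simp only [numCycles_eq_card_cycleType_add_card_sub_sum, cycleType_conj]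

theorem sign_eq_neg_one_pow_card_add_numCycles (σ : Perm α) :
    sign σ = (-1) ^ (Fintype.card α + numCycles σ) := by
  obtain ⟨t, ht⟩ := Nat.exists_eq_add_of_le (sum_cycleType_le σ)
  rw [sign_of_cycleType, numCycles_eq_card_cycleType_add_card_sub_sum, ht, Nat.add_sub_cancel_left,
    show σ.cycleType.sum + t + (Multiset.card σ.cycleType + t) =
      σ.cycleType.sum + Multiset.card σ.cycleType + 2 * t by ring, pow_add _ _ (2 * t), pow_mul,
    neg_one_sq, one_pow, mul_one]

theorem numCycles_mul_swap_ne {x y : α} (hxy : x ≠ y) (σ : Perm α) :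
    numCycles (σ * swap x y) ≠ numCycles σ := by
  intro h
  have := sign_eq_neg_one_pow_card_add_numCycles (σ * swap x y)
  rw [h, ← sign_eq_neg_one_pow_card_add_numCycles, sign_mul, sign_swap hxy, mul_neg_one] at this
  exact units_ne_neg_self _ this.symm

end CycleType

section CutJoin

variable [Fintype α] [DecidableEq α] {σ : Perm α} {x y : α}

/- `⟨σ, (x y)⟩ = ⟨σ (x y), (x y)⟩`: counting its orbits from both generating sets, and using that
`o(σ)` and `o(σ (x y))` have different parities, decides which of the two cycle counts is larger. -/
theorem numCycles_mul_swap_of_sameCycle (hxy : x ≠ y) (h : σ.SameCycle x y) :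
    numCycles (σ * swap x y) = numCycles σ + 1 := by
  have hσ := numOrbits_sup_zpowers_swap_of_rel (orbitRel_zpowers_apply.2 h)
  rw [← Subgroup.zpowers_mul_sup_zpowers_right σ (swap x y)] at hσ
  have hne := numCycles_mul_swap_ne hxy σ
  unfold numCycles at *
  by_cases h' : (σ * swap x y).SameCycle x y
  · rw [numOrbits_sup_zpowers_swap_of_rel (orbitRel_zpowers_apply.2 h')] at hσ
    exact absurd hσ hne
  · have := numOrbits_sup_zpowers_swap_add_one (mt orbitRel_zpowers_apply.1 h')
    omega

theorem numCycles_mul_swap_add_one (hxy : x ≠ y) (h : ¬σ.SameCycle x y) :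
    numCycles (σ * swap x y) + 1 = numCycles σ := by
  have hσ := numOrbits_sup_zpowers_swap_add_one (mt orbitRel_zpowers_apply.1 h)
  rw [← Subgroup.zpowers_mul_sup_zpowers_right σ (swap x y)] at hσ
  have hne := numCycles_mul_swap_ne hxy σ
  unfold numCycles at *
  by_cases h' : (σ * swap x y).SameCycle x y
  · rw [numOrbits_sup_zpowers_swap_of_rel (orbitRel_zpowers_apply.2 h')] at hσ
    exact hσ
  · have := numOrbits_sup_zpowers_swap_add_one (mt orbitRel_zpowers_apply.1 h')
    omega

theorem numCycles_mul_swap_le (hxy : x ≠ y) (σ : Perm α) :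
    numCycles (σ * swap x y) ≤ numCycles σ + 1 := by
  by_cases h : σ.SameCycle x y
  · exact (numCycles_mul_swap_of_sameCycle hxy h).le
  · have := numCycles_mul_swap_add_one hxy h
    omega

end CutJoin

theorem numOrbits_sup_le_numCycles_mul [Finite α] (A B : Perm α) :
    numOrbits (zpowers A ⊔ zpowers B) ≤ numCycles (A * B) :=
  numOrbits_antitone (Subgroup.zpowers_mul_le_sup_zpowers A B)

variable [Fintype α] [DecidableEq α]

theorem numCycles_add_numCycles_add_numCycles_mul_le (A B : Perm α) :
    numCycles A + numCycles B + numCycles (A * B) ≤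
      Fintype.card α + 2 * numOrbits (zpowers A ⊔ zpowers B) := by
  by_cases hB : B = 1
  · subst hB
    simp only [numCycles_one, mul_one, Subgroup.zpowers_one_eq_bot, sup_bot_eq]
    rw [numCycles]
    omega
  obtain ⟨x, hx⟩ : ∃ x, B x ≠ x := not_forall.1 fun h => hB (Equiv.ext h)
  obtain ⟨y, hy⟩ : ∃ y, B x = y := ⟨_, rfl⟩
  have hxy : x ≠ y := hy ▸ hx.symm
  have hsplit := numCycles_mul_swap_of_sameCycle hxy ⟨1, by simpa using hy⟩
  have hcard := numCycles_le_card (B * swap x y)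
  have ih := numCycles_add_numCycles_add_numCycles_mul_le A (B * swap x y)
  have hmono : numOrbits (zpowers A ⊔ zpowers (B * swap x y) ⊔ zpowers (swap x y)) ≤
      numOrbits (zpowers A ⊔ zpowers B) := by
    rw [sup_assoc, Subgroup.zpowers_mul_sup_zpowers_right, ← sup_assoc]
    exact numOrbits_antitone le_sup_left
  rw [show A * B = A * (B * swap x y) * swap x y by simp [mul_assoc]]
  by_cases hrel : orbitRel ↥(zpowers A ⊔ zpowers (B * swap x y)) α x y
  · have := numOrbits_sup_zpowers_swap_of_rel hrel
    have := numCycles_mul_swap_le hxy (A * (B * swap x y))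
    omega
  · have := numOrbits_sup_zpowers_swap_add_one hrel
    have := numCycles_mul_swap_add_one hxy fun h => hrel <|
      gc_orbitRel_youngSubgroup.monotone_l (Subgroup.zpowers_mul_le_sup_zpowers A (B * swap x y))
        (orbitRel_zpowers_apply.2 h)
    omega
termination_by Fintype.card α - numCycles B

theorem numOrbits_zpowers_sup_add_numCycles_le {π B : Perm α}
    (hB : B ∈ youngSubgroup (SameCycle.setoid π)) (L : Subgroup (Perm α)) :
    numOrbits (zpowers B ⊔ L) + numCycles π ≤ numOrbits (zpowers π ⊔ L) + numCycles B := by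
  by_cases hex : ∃ x y, π.SameCycle x y ∧ ¬B.SameCycle x y
  · obtain ⟨x, y, hπ, hB'⟩ := hex
    have hxy : x ≠ y := fun h => hB' (h ▸ SameCycle.rfl)
    have hmerge := numCycles_mul_swap_add_one hxy hB'
    have ih :=
      numOrbits_zpowers_sup_add_numCycles_le (mul_mem hB (swap_mem_youngSubgroup hπ)) L
    have h1 := numOrbits_le_sup_zpowers_swap_add_one (zpowers B ⊔ L) x y
    have h2 : numOrbits (zpowers B ⊔ L ⊔ zpowers (swap x y)) ≤
        numOrbits (zpowers (B * swap x y) ⊔ L) :=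
      numOrbits_antitone (sup_le ((Subgroup.zpowers_mul_le_sup_zpowers B _).trans
        (sup_le_sup_right le_sup_left _)) (le_sup_right.trans le_sup_left))
    omega
  · push Not at hex
    have heq : orbitRel (zpowers B) α = orbitRel (zpowers π) α := by
      have := orbitRel_le_iff_le_youngSubgroup.2 (zpowers_le.2 hB)
      simp only [orbitRel_zpowers] at this ⊢
      exact le_antisymm this fun a b h => hex a b h
    simp only [numCycles, numOrbits, orbitRel_sup, heq, le_refl]
termination_by numCycles B

theorem numCycles_add_numCycles_le (A B : Perm α) :
    numCycles A + numCycles B ≤ numCycles (A * B) + Fintype.card α := by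
  have h := numOrbits_zpowers_sup_add_numCycles_le
    (one_mem (youngSubgroup (SameCycle.setoid A))) (zpowers B)
  rw [Subgroup.zpowers_one_eq_bot, bot_sup_eq, numCycles_one] at h
  have := numOrbits_sup_le_numCycles_mul A B
  unfold numCycles at *
  omega

theorem numCycles_finRotate_le_one (n : ℕ) : numCycles (finRotate n) ≤ 1 := by
  rcases lt_or_ge n 2 with h | h
  · exact (numCycles_le_card _).trans (by simp; omega)
  · simp [numCycles_eq_card_cycleType_add_card_sub_sum, cycleType_finRotate_of_le h]

end Equiv.Perm

theorem cycleCount_eq_numCycles {p : ℕ} (σ : Perm (Fin p)) : cycleCount σ = σ.numCycles :=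
  (numCycles_eq_card_cycleType_add σ).symm

/-- For `π ∈ NC(p)` and every integer `l`: `|1| + |π^l γ| = |πγ⁻¹| + |π^{l+1}|`,
where `|1| = p`. -/
theorem cycleCount_zpow_identity (p : ℕ) (π : Equiv.Perm (Fin p)) (hπ : IsNCPerm π)
    (l : ℤ) :
    p + cycleCount (π ^ l * finRotate p) =
      cycleCount (π * (finRotate p)⁻¹) + cycleCount (π ^ (l + 1)) := by
  simp only [IsNCPerm, cycleCount_eq_numCycles] at hπ ⊢
  have hγ := numCycles_finRotate_le_one p
  set γ := finRotate p
  have hK : numCycles (π⁻¹ * γ) = numCycles (π * γ⁻¹) := by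
    rw [← numCycles_conj π, ← numCycles_inv (π * γ⁻¹)]
    group
  have hBK : π ^ (l + 1) * (π⁻¹ * γ) = π ^ l * γ := by group
  have htri := numCycles_add_numCycles_le (π ^ (l + 1)) (π⁻¹ * γ)
  have hgenus := numCycles_add_numCycles_add_numCycles_mul_le (π ^ (l + 1)) (π⁻¹ * γ)
  have hB : π ^ (l + 1) ∈ youngSubgroup (SameCycle.setoid π) :=
    fun _ => sameCycle_zpow_left.2 SameCycle.rfl
  have hsub := numOrbits_zpowers_sup_add_numCycles_le hB (zpowers (π⁻¹ * γ))
  have hπγ := numOrbits_sup_le_numCycles_mul π (π⁻¹ * γ)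
  rw [mul_inv_cancel_left] at hπγ
  rw [hBK, hK, Fintype.card_fin] at *
  omega
end

section
/- Let Λ ∈ M_n(ℂ) ⊗ M_n(ℂ) correspond to φ(A) = BAC, i.e. Λ_{ab,cd} = B_{ba}C_{cd}. Then for any π, σ ∈ S_p, Tr_{(π,σ)}(Λ) = Tr_{πσ⁻¹}(BC), where Tr_ρ(A) denotes the product over cycles of ρ of traces of powers of A. -/
/-- The generalized trace `Tr_ρ(A) = Σ_e Π_s A_{e_s e_{ρ(s)}}`, equal to the product over
the cycles `c` of `ρ` of `Tr(A^{#c})`. -/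
noncomputable def permTr {n p : ℕ} (A : Matrix (Fin n) (Fin n) ℂ) (ρ : Equiv.Perm (Fin p)) : ℂ :=
  ∑ e : Fin p → Fin n, ∏ s, A (e s) (e (ρ s))

/-- The generalized mixed trace
`Tr_{(π,σ)}(Λ) = Σ_{a,e} Π_s Λ_{e_s a_s, e_{π(s)} a_{σ(s)}}` of a matrix
`Λ ∈ M_N(ℂ) ⊗ M_N(ℂ)` with entries `Λ_{ab,cd} = Λ (a,b) (c,d)`. -/
noncomputable def mixedTr {N : Type*} [Fintype N] {p : ℕ} (Λ : Matrix (N × N) (N × N) ℂ)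
    (π σ : Equiv.Perm (Fin p)) : ℂ :=
  ∑ e : Fin p → N, ∑ a : Fin p → N, ∏ s, Λ (e s, a s) (e (π s), a (σ s))

/-!
Summing out the indices `e` of the inner factor turns each pair `B_{a_s e_s} C_{e_{π s} a_{σ s}}`
into an entry of `BC`, leaving `Tr_{σπ⁻¹}(BC)`. Since `σπ⁻¹ = (πσ⁻¹)⁻¹` and a permutation is
conjugate to its inverse, it remains to note that `Tr_ρ` depends only on the conjugacy class of `ρ`.
-/

theorem Matrix.prod_mul_apply_eq_sum {ι l m o R : Type*} [Fintype ι] [DecidableEq ι]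
    [Fintype m] [CommSemiring R] (B : Matrix l m R) (C : Matrix m o R) (a : ι → l) (b : ι → o) :
    ∏ s, (B * C) (a s) (b s) = ∑ e : ι → m, ∏ s, B (a s) (e s) * C (e s) (b s) := by
  simp only [Matrix.mul_apply]
  exact Fintype.prod_sum _

theorem permTr_conj {n p : ℕ} (A : Matrix (Fin n) (Fin n) ℂ) (τ ρ : Equiv.Perm (Fin p)) :
    permTr A (τ * ρ * τ⁻¹) = permTr A ρ := by
  refine Fintype.sum_equiv (Equiv.arrowCongr τ⁻¹ (Equiv.refl _)) _ _ fun e => ?_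
  rw [← Equiv.prod_comp τ]
  simp [Equiv.Perm.inv_def]

theorem permTr_eq_of_isConj {n p : ℕ} (A : Matrix (Fin n) (Fin n) ℂ)
    {ρ ρ' : Equiv.Perm (Fin p)} (h : IsConj ρ ρ') : permTr A ρ = permTr A ρ' := by
  obtain ⟨τ, rfl⟩ := isConj_iff.mp h
  exact (permTr_conj A τ ρ).symm

theorem permTr_inv {n p : ℕ} (A : Matrix (Fin n) (Fin n) ℂ) (ρ : Equiv.Perm (Fin p)) :
    permTr A ρ⁻¹ = permTr A ρ :=
  permTr_eq_of_isConj A <| by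
    rw [Equiv.Perm.isConj_iff_cycleType_eq, Equiv.Perm.cycleType_inv]

theorem mixedTr_sandwich_eq_permTr_mul_inv {n p : ℕ} (B C : Matrix (Fin n) (Fin n) ℂ)
    (π σ : Equiv.Perm (Fin p)) :
    mixedTr (fun x y => B x.2 x.1 * C y.1 y.2) π σ = permTr (B * C) (σ * π⁻¹) := by
  unfold mixedTr permTr
  rw [Finset.sum_comm]
  refine Fintype.sum_congr _ _ fun a => ?_
  rw [Matrix.prod_mul_apply_eq_sum]
  refine Fintype.sum_congr _ _ fun e => ?_
  have reindex : ∏ s, C (e (π s)) (a (σ s)) = ∏ s, C (e s) (a ((σ * π⁻¹) s)) := by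
    rw [← Equiv.prod_comp π (fun s => C (e s) (a ((σ * π⁻¹) s)))]
    simp
  simp only [Finset.prod_mul_distrib, reindex]

/-- For `Λ` with `Λ_{ab,cd} = B_{ba} C_{cd}` (i.e. `φ(A) = BAC`),
`Tr_{(π,σ)}(Λ) = Tr_{πσ⁻¹}(BC)`. -/
theorem mixedTr_sandwich (n p : ℕ) (B C : Matrix (Fin n) (Fin n) ℂ)
    (π σ : Equiv.Perm (Fin p)) :
    mixedTr (fun x y => B x.2 x.1 * C y.1 y.2) π σ = permTr (B * C) (π * σ⁻¹) := by
  rw [mixedTr_sandwich_eq_permTr_mul_inv, ← permTr_inv, mul_inv_rev, inv_inv]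
end
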